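/- Let 𝔼 be a homogeneous expectation operator on B_b(𝒳) and define 𝕋(t) := 𝔼 Θ_t for t ≥ 0. Then (𝕋(t))_{t≥0} is a semigroup of Markovian kernel operators on the space of ℱ₀₋-measurable bounded functions, and 𝕋(t) Θ_{−t} F = F for every ℱ₀₋-measurable bounded F and t ≥ 0. -/

import Mathlib

open MeasureTheory Set Filter Topology
open scoped ENNReal

/-- The σ-algebra on a set `𝒳` of paths `ℝ → X` generated by the evaluation maps
`π_t : x ↦ x t` for `t ∈ I`. -/
def evalSigma {X : Type*} [m : MeasurableSpace X] (𝒳 : Set (ℝ → X)) (I : Set ℝ) :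
    MeasurableSpace 𝒳 :=
  ⨆ t ∈ I, MeasurableSpace.comap (fun x : 𝒳 => x.1 t) m

lemma evalSigma_mono {X : Type*} [MeasurableSpace X] (𝒳 : Set (ℝ → X)) {I J : Set ℝ}
    (hIJ : I ⊆ J) : evalSigma 𝒳 I ≤ evalSigma 𝒳 J :=
  biSup_mono fun _ ht => hIJ ht

lemma abs_integral_le_of_forall_abs_le {α : Type*} {_ : MeasurableSpace α} (μ : Measure α)
    [IsProbabilityMeasure μ] {f : α → ℝ} {C : ℝ} (hf : ∀ x, |f x| ≤ C) :
    |∫ x, f x ∂μ| ≤ C := by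
  simpa using norm_integral_le_of_norm_le_const (μ := μ)
    (.of_forall fun x => (Real.norm_eq_abs (f x)).trans_le (hf x))

theorem homogeneous_expectation_gives_evolutionary_semigroup_general
    {X : Type*} [MeasurableSpace X]
    (𝒳 : Set (ℝ → X)) (ϑ : ℝ → 𝒳 → 𝒳)
    (hzero : ∀ x, ϑ 0 x = x)
    (hgroup : ∀ (s t : ℝ) (x : 𝒳), ϑ s (ϑ t x) = ϑ (s + t) x)
    (hϑmeas : ∀ t : ℝ,
      @Measurable 𝒳 𝒳 (evalSigma 𝒳 Set.univ) (evalSigma 𝒳 Set.univ) (ϑ t))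
    (k : 𝒳 → @Measure 𝒳 (evalSigma 𝒳 Set.univ))
    (hprob : ∀ x, IsProbabilityMeasure (k x))
    (hEmeas : ∀ F : 𝒳 → ℝ, (∃ C, ∀ x, |F x| ≤ C) →
      @Measurable 𝒳 ℝ (evalSigma 𝒳 Set.univ) _ F →
      @Measurable 𝒳 ℝ (evalSigma 𝒳 (Set.Iio 0)) _ (fun x => ∫ y, F y ∂(k x)))
    (hEproj : ∀ F : 𝒳 → ℝ, (∃ C, ∀ x, |F x| ≤ C) →
      @Measurable 𝒳 ℝ (evalSigma 𝒳 (Set.Iio 0)) _ F →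
      ∀ x, ∫ y, F y ∂(k x) = F x)
    (hhom : ∀ t : ℝ, 0 ≤ t → ∀ F : 𝒳 → ℝ, (∃ C, ∀ x, |F x| ≤ C) →
      @Measurable 𝒳 ℝ (evalSigma 𝒳 Set.univ) _ F →
      ∀ x, ∫ y, (∫ z, F (ϑ (-t) z) ∂(k (ϑ t y))) ∂(k x) = ∫ y, F y ∂(k x)) :
    ∀ F : 𝒳 → ℝ, (∃ C, ∀ x, |F x| ≤ C) →
      @Measurable 𝒳 ℝ (evalSigma 𝒳 (Set.Iio 0)) _ F →
      -- `𝕋(t)` maps bounded `ℱ₀₋`-measurable functions to bounded `ℱ₀₋`-measurable ones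
      (∀ t : ℝ, 0 ≤ t →
        (@Measurable 𝒳 ℝ (evalSigma 𝒳 (Set.Iio 0)) _
            (fun x => ∫ y, F (ϑ t y) ∂(k x)) ∧
          ∃ C, ∀ x, |∫ y, F (ϑ t y) ∂(k x)| ≤ C)) ∧
      -- semigroup law `𝕋(t) 𝕋(s) = 𝕋(t + s)` and `𝕋(0) = I`
      (∀ t s : ℝ, 0 ≤ t → 0 ≤ s → ∀ x,
        ∫ y, (∫ z, F (ϑ s z) ∂(k (ϑ t y))) ∂(k x) = ∫ y, F (ϑ (t + s) y) ∂(k x)) ∧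
      (∀ x, ∫ y, F (ϑ 0 y) ∂(k x) = F x) ∧
      -- `𝕋(t) Θ_{−t} F = F`
      (∀ t : ℝ, 0 ≤ t → ∀ x, ∫ y, F (ϑ (-t) (ϑ t y)) ∂(k x) = F x) := by
  intro F ⟨C, hC⟩ hF
  have hF_shift_meas : ∀ t, @Measurable 𝒳 ℝ (evalSigma 𝒳 univ) _ (fun y => F (ϑ t y)) :=
    fun t => (hF.mono (evalSigma_mono 𝒳 (subset_univ _)) le_rfl).comp (hϑmeas t)
  have hF_shift_bdd : ∀ t, ∃ C, ∀ y, |F (ϑ t y)| ≤ C := fun t => ⟨C, fun _ => hC _⟩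
  refine ⟨fun t _ => ⟨hEmeas _ (hF_shift_bdd t) (hF_shift_meas t), C, fun x => ?_⟩,
    fun t s ht _ x => ?_, fun x => ?_, fun t _ x => ?_⟩
  · have := hprob x
    exact abs_integral_le_of_forall_abs_le (k x) fun _ => hC _
  · -- homogeneity applied to `Θ_{t+s} F`, using `Θ_{-t} Θ_{t+s} = Θ_s`
    simpa only [hgroup, add_neg_cancel_comm] using
      hhom t ht _ (hF_shift_bdd (t + s)) (hF_shift_meas (t + s)) x
  · simpa only [hzero] using hEproj F ⟨C, hC⟩ hF x
  · simpa only [hgroup, neg_add_cancel, hzero] using hEproj F ⟨C, hC⟩ hF x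

/-- Let `𝔼` be a homogeneous expectation operator with kernel `k` and define
`𝕋(t) := 𝔼 Θ_t`, i.e. `(𝕋(t) F)(x) = ∫ F (ϑ_t y) k(x, dy)`.  Then `(𝕋(t))_{t ≥ 0}` is a
semigroup of Markovian kernel operators on the space of bounded `ℱ₀₋`-measurable
functions, and `𝕋(t) Θ_{−t} F = F` for every such `F` and `t ≥ 0`. -/
theorem homogeneous_expectation_gives_evolutionary_semigroup
    {X : Type*} [MetricSpace X] [CompleteSpace X]
    [TopologicalSpace.SeparableSpace X] [MeasurableSpace X] [BorelSpace X]
    (𝒳 : Set (ℝ → X)) (ϑ : ℝ → 𝒳 → 𝒳)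
    (hϑ : ∀ (t : ℝ) (x : 𝒳) (s : ℝ), (ϑ t x).1 s = x.1 (t + s))
    (hzero : ∀ x, ϑ 0 x = x)
    (hgroup : ∀ (s t : ℝ) (x : 𝒳), ϑ s (ϑ t x) = ϑ (s + t) x)
    (hϑmeas : ∀ t : ℝ,
      @Measurable 𝒳 𝒳 (evalSigma 𝒳 Set.univ) (evalSigma 𝒳 Set.univ) (ϑ t))
    (k : 𝒳 → @Measure 𝒳 (evalSigma 𝒳 Set.univ))
    (hprob : ∀ x, IsProbabilityMeasure (k x))
    (hkmeas : ∀ A : Set 𝒳, MeasurableSet[evalSigma 𝒳 Set.univ] A →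
      @Measurable 𝒳 ℝ≥0∞ (evalSigma 𝒳 Set.univ) _ (fun x => k x A))
    (hEmeas : ∀ F : 𝒳 → ℝ, (∃ C, ∀ x, |F x| ≤ C) →
      @Measurable 𝒳 ℝ (evalSigma 𝒳 Set.univ) _ F →
      @Measurable 𝒳 ℝ (evalSigma 𝒳 (Set.Iio 0)) _ (fun x => ∫ y, F y ∂(k x)))
    (hEproj : ∀ F : 𝒳 → ℝ, (∃ C, ∀ x, |F x| ≤ C) →
      @Measurable 𝒳 ℝ (evalSigma 𝒳 (Set.Iio 0)) _ F →
      ∀ x, ∫ y, F y ∂(k x) = F x)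
    (hhom : ∀ t : ℝ, 0 ≤ t → ∀ F : 𝒳 → ℝ, (∃ C, ∀ x, |F x| ≤ C) →
      @Measurable 𝒳 ℝ (evalSigma 𝒳 Set.univ) _ F →
      ∀ x, ∫ y, (∫ z, F (ϑ (-t) z) ∂(k (ϑ t y))) ∂(k x) = ∫ y, F y ∂(k x)) :
    ∀ F : 𝒳 → ℝ, (∃ C, ∀ x, |F x| ≤ C) →
      @Measurable 𝒳 ℝ (evalSigma 𝒳 (Set.Iio 0)) _ F →
      -- `𝕋(t)` maps bounded `ℱ₀₋`-measurable functions to bounded `ℱ₀₋`-measurable ones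
      (∀ t : ℝ, 0 ≤ t →
        (@Measurable 𝒳 ℝ (evalSigma 𝒳 (Set.Iio 0)) _
            (fun x => ∫ y, F (ϑ t y) ∂(k x)) ∧
          ∃ C, ∀ x, |∫ y, F (ϑ t y) ∂(k x)| ≤ C)) ∧
      -- semigroup law `𝕋(t) 𝕋(s) = 𝕋(t + s)` and `𝕋(0) = I`
      (∀ t s : ℝ, 0 ≤ t → 0 ≤ s → ∀ x,
        ∫ y, (∫ z, F (ϑ s z) ∂(k (ϑ t y))) ∂(k x) = ∫ y, F (ϑ (t + s) y) ∂(k x)) ∧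
      (∀ x, ∫ y, F (ϑ 0 y) ∂(k x) = F x) ∧
      -- `𝕋(t) Θ_{−t} F = F`
      (∀ t : ℝ, 0 ≤ t → ∀ x, ∫ y, F (ϑ (-t) (ϑ t y)) ∂(k x) = F x) :=
  homogeneous_expectation_gives_evolutionary_semigroup_general 𝒳 ϑ hzero hgroup hϑmeas k hprob
    hEmeas hEproj hhom
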